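/- Let A₁ = A(r₁) ⊆ Matrix (Fin n) (Fin n) ℂ and A₂ = A(r₂) ⊆ Matrix (Fin m) (Fin m) ℂ be digraph algebras with their diagonal masas, and let φ₁, φ₂ : A₁ → A₂ be injective standard regular star-extendible homomorphisms. If there exists a unitary U ∈ A₂ such that Uᴴ · φ₁(a) · U = φ₂(a) for all a ∈ A₁, then there exists a unitary V ∈ A₂ lying in the normaliser N_{D_m}(A₂) of the diagonal masa such that Vᴴ · φ₁(a) · V = φ₂(a) for all a ∈ A₁. -/

import Mathlib

open Matrix

noncomputable section

/-- The digraph algebra `A(r)`: matrices supported on the relation `r`. -/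
def digraphAlg (n : ℕ) (r : Fin n → Fin n → Prop) : Set (Matrix (Fin n) (Fin n) ℂ) :=
  {M | ∀ i j, ¬ r i j → M i j = 0}

/-- `C*(A(r))`: the *-subalgebra of `Mₙ(ℂ)` generated by `A(r)`. -/
def cstarAlg (n : ℕ) (r : Fin n → Fin n → Prop) : Set (Matrix (Fin n) (Fin n) ℂ) :=
  (StarAlgebra.adjoin ℂ (digraphAlg n r) : StarSubalgebra ℂ (Matrix (Fin n) (Fin n) ℂ))

/-- A star-extendible homomorphism `A(r₁) → A(r₂)`, as (the extension to `C*(A(r₁))` of) a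
function which is a ⋆-algebra homomorphism on `C*(A(r₁))` and maps `A(r₁)` into `A(r₂)`. -/
def IsStarExtHom (n m : ℕ) (r₁ : Fin n → Fin n → Prop) (r₂ : Fin m → Fin m → Prop)
    (Φ : Matrix (Fin n) (Fin n) ℂ → Matrix (Fin m) (Fin m) ℂ) : Prop :=
  (∀ x ∈ cstarAlg n r₁, ∀ y ∈ cstarAlg n r₁, Φ (x + y) = Φ x + Φ y) ∧
  (∀ (c : ℂ), ∀ x ∈ cstarAlg n r₁, Φ (c • x) = c • Φ x) ∧
  (∀ x ∈ cstarAlg n r₁, ∀ y ∈ cstarAlg n r₁, Φ (x * y) = Φ x * Φ y) ∧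
  (∀ x ∈ cstarAlg n r₁, Φ xᴴ = (Φ x)ᴴ) ∧
  (∀ a ∈ digraphAlg n r₁, Φ a ∈ digraphAlg m r₂)

/-- `Φ` has multiplicity one: every diagonal matrix unit is sent to a matrix of rank ≤ 1. -/
def MultOne (n m : ℕ) (Φ : Matrix (Fin n) (Fin n) ℂ → Matrix (Fin m) (Fin m) ℂ) : Prop :=
  ∀ i : Fin n, (Φ (single i i (1 : ℂ))).rank ≤ 1

/-- `Φ` is regular (1-decomposable): a finite direct sum of multiplicity one star-extendible
homomorphisms with mutually orthogonal ranges. -/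
def IsRegularHom (n m : ℕ) (r₁ : Fin n → Fin n → Prop) (r₂ : Fin m → Fin m → Prop)
    (Φ : Matrix (Fin n) (Fin n) ℂ → Matrix (Fin m) (Fin m) ℂ) : Prop :=
  IsStarExtHom n m r₁ r₂ Φ ∧
  ∃ (d : ℕ) (Ψ : Fin d → Matrix (Fin n) (Fin n) ℂ → Matrix (Fin m) (Fin m) ℂ),
    (∀ t, IsStarExtHom n m r₁ r₂ (Ψ t) ∧ MultOne n m (Ψ t)) ∧
    (∀ s t, s ≠ t → Ψ s 1 * Ψ t 1 = 0) ∧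
    (∀ x ∈ cstarAlg n r₁, Φ x = ∑ t, Ψ t x)

/-- The partial isometry normaliser `N_{Dₘ}(A(r))` of the diagonal masa in `A(r)`. -/
def diagNormaliser (m : ℕ) (r : Fin m → Fin m → Prop) : Set (Matrix (Fin m) (Fin m) ℂ) :=
  {v | v ∈ digraphAlg m r ∧ v * vᴴ * v = v ∧
    ∀ d : Matrix (Fin m) (Fin m) ℂ, d.IsDiag → (vᴴ * d * v).IsDiag ∧ (v * d * vᴴ).IsDiag}

/-- `Φ` is standard regular: regular and mapping the diagonal normaliser into the
diagonal normaliser. -/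
def IsStandardRegularHom (n m : ℕ) (r₁ : Fin n → Fin n → Prop) (r₂ : Fin m → Fin m → Prop)
    (Φ : Matrix (Fin n) (Fin n) ℂ → Matrix (Fin m) (Fin m) ℂ) : Prop :=
  IsRegularHom n m r₁ r₂ Φ ∧ ∀ v ∈ diagNormaliser n r₁, Φ v ∈ diagNormaliser m r₂

/-- A unitary element of the digraph algebra `A(r)`. -/
def IsUnitaryIn (m : ℕ) (r : Fin m → Fin m → Prop) (U : Matrix (Fin m) (Fin m) ℂ) : Prop :=
  U ∈ digraphAlg m r ∧ Uᴴ * U = 1 ∧ U * Uᴴ = 1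

/-- The L²→L² operator norm of a matrix. -/
def l2OpNorm {k : ℕ} (a : Matrix (Fin k) (Fin k) ℂ) : ℝ :=
  ‖Matrix.toEuclideanCLM (𝕜 := ℂ) a‖


/-!
The units `F i j = φ₁ (e i j)` and `G i j = φ₂ (e i j)`, for `i, j` in one class of the
equivalence relation generated by `r₁`, normalise the diagonal, so they are monomial matrices and
`F i i`, `G i i` are diagonal projections. As `U` is invertible, some permutation matrix `P` has
its support inside that of `U`, and comparing entries, `F i i * U = U * G i i` forces
`F i i * P = P * G i i`. Transporting each block to the block of a class representative `ρ i`
and back, `V = ∑ i, F i (ρ i) * P * G (ρ i) i + (1 - ∑ i, F i i) * P` is a unitary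
intertwining all the units; it normalises the diagonal blockwise, and its support lies inside
that of `U`, hence `V ∈ A(r₂)`.
-/

open Equiv

namespace Matrix

variable {ι α : Type*}

theorem isDiag_sum {κ : Type*} [AddCommMonoid α] {s : Finset κ} {A : κ → Matrix ι ι α}
    (h : ∀ a ∈ s, (A a).IsDiag) : (∑ a ∈ s, A a).IsDiag :=
  Finset.sum_induction _ IsDiag (fun _ _ => IsDiag.add) isDiag_zero h

variable [Fintype ι] [DecidableEq ι]

theorem IsDiag.mul [NonUnitalNonAssocSemiring α] {A B : Matrix ι ι α} (hA : A.IsDiag)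
    (hB : B.IsDiag) : (A * B).IsDiag := by
  rw [← hA.diagonal_diag, ← hB.diagonal_diag, diagonal_mul_diagonal]
  exact isDiag_diagonal _

theorem IsDiag.commute [CommSemiring α] {A B : Matrix ι ι α} (hA : A.IsDiag)
    (hB : B.IsDiag) : Commute A B := by
  rw [← hA.diagonal_diag, ← hB.diagonal_diag]
  simp only [Commute, SemiconjBy, diagonal_mul_diagonal, mul_comm]

theorem IsDiag.mul_apply_eq_zero [NonUnitalNonAssocSemiring α] {D X : Matrix ι ι α}
    (hD : D.IsDiag) {k l : ι} (h : X k l = 0) : (D * X) k l = 0 := by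
  rw [← hD.diagonal_diag, diagonal_mul, h, mul_zero]

theorem IsDiag.mul_eq_mul_of_support [CommRing α] [NoZeroDivisors α]
    {D₁ D₂ U P : Matrix ι ι α} (hD₁ : D₁.IsDiag) (hD₂ : D₂.IsDiag) (hU : D₁ * U = U * D₂)
    (hP : ∀ k l, P k l ≠ 0 → U k l ≠ 0) : D₁ * P = P * D₂ := by
  rw [← hD₁.diagonal_diag, ← hD₂.diagonal_diag] at hU ⊢
  ext k l
  have hkl := congrFun (congrFun hU k) l
  simp only [diagonal_mul, mul_diagonal, diag] at hkl ⊢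
  by_cases hPkl : P k l = 0
  · simp [hPkl]
  · rw [mul_comm, mul_right_cancel₀ (hP k l hPkl) (hkl.trans (mul_comm _ _))]

theorem exists_perm_apply_ne_zero [CommRing α] {A : Matrix ι ι α} (h : A.det ≠ 0) :
    ∃ σ : Perm ι, ∀ i, A i (σ i) ≠ 0 := by
  by_contra! hA
  apply h
  rw [← det_transpose, det_apply']
  refine Finset.sum_eq_zero fun σ _ => ?_
  obtain ⟨i, hi⟩ := hA σ
  rw [Finset.prod_eq_zero (Finset.mem_univ i) hi, mul_zero]

theorem exists_permMatrix_support_subset [CommRing α] {U : Matrix ι ι α} (hU : U.det ≠ 0) :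
    ∃ σ : Perm ι, ∀ k l, σ.permMatrix α k l ≠ 0 → U k l ≠ 0 := by
  obtain ⟨σ, hσ⟩ := exists_perm_apply_ne_zero hU
  refine ⟨σ, fun k l h => ?_⟩
  obtain ⟨rfl, -⟩ : σ k = l ∧ (1 : α) ≠ 0 := by simpa [PEquiv.toMatrix_apply] using h
  exact hσ k

theorem permMatrix_mul_conjTranspose_self [CommRing α] [StarRing α] (σ : Perm ι) :
    σ.permMatrix α * (σ.permMatrix α)ᴴ = 1 := by
  rw [conjTranspose_permMatrix, ← permMatrix_mul, inv_mul_cancel, permMatrix_one]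

end Matrix

section NormalizesDiag

variable {ι α : Type*} [Fintype ι] [CommRing α] [StarRing α]

def NormalizesDiag (v : Matrix ι ι α) : Prop :=
  ∀ d : Matrix ι ι α, d.IsDiag → (vᴴ * d * v).IsDiag ∧ (v * d * vᴴ).IsDiag

namespace NormalizesDiag

variable {v w : Matrix ι ι α}

theorem conjTranspose (hv : NormalizesDiag v) : NormalizesDiag vᴴ := fun d hd => by
  simpa only [conjTranspose_conjTranspose] using (hv d hd).symm

theorem mul (hv : NormalizesDiag v) (hw : NormalizesDiag w) : NormalizesDiag (v * w) :=
  fun d hd =>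
    ⟨by simpa only [conjTranspose_mul, Matrix.mul_assoc] using (hw _ (hv d hd).1).1,
      by simpa only [conjTranspose_mul, Matrix.mul_assoc] using (hv _ (hw d hd).2).2⟩

variable [DecidableEq ι]

theorem isDiag_of_isStarProjection (hv : NormalizesDiag v) (hp : IsStarProjection v) :
    v.IsDiag := by
  have h := (hv 1 isDiag_one).1
  rwa [Matrix.mul_one, ← star_eq_conjTranspose, hp.isSelfAdjoint.star_eq,
    hp.isIdempotentElem.eq] at h

theorem eq_of_row_apply_ne_zero [NoZeroDivisors α] (hv : NormalizesDiag v)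
    {k p q : ι} (hp : v k p ≠ 0) (hq : v k q ≠ 0) : p = q := by
  by_contra hpq
  have hentry : (vᴴ * diagonal (Pi.single k 1) * v : Matrix ι ι α) p q =
      star (v k p) * v k q := by
    rw [mul_apply]
    simp [mul_diagonal, Pi.single_apply]
  have h : (vᴴ * diagonal (Pi.single k 1) * v : Matrix ι ι α) p q = 0 :=
    (hv _ (isDiag_diagonal _)).1 hpq
  rw [hentry] at h
  exact mul_ne_zero (star_ne_zero.mpr hp) hq h

theorem eq_of_col_apply_ne_zero [NoZeroDivisors α] (hv : NormalizesDiag v)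
    {l p q : ι} (hp : v p l ≠ 0) (hq : v q l ≠ 0) : p = q := by
  by_contra hpq
  have hentry : (v * diagonal (Pi.single l 1) * vᴴ : Matrix ι ι α) p q =
      v p l * star (v q l) := by
    rw [mul_apply]
    simp [mul_diagonal, Pi.single_apply]
  have h : (v * diagonal (Pi.single l 1) * vᴴ : Matrix ι ι α) p q = 0 :=
    (hv _ (isDiag_diagonal _)).2 hpq
  rw [hentry] at h
  exact mul_ne_zero hp (star_ne_zero.mpr hq) h

theorem mul_mul_apply_of_ne_zero [NoZeroDivisors α] {F G : Matrix ι ι α}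
    (hF : NormalizesDiag F) (hG : NormalizesDiag G) {k l p q : ι} (hp : F k p ≠ 0)
    (hq : G q l ≠ 0) (X : Matrix ι ι α) : (F * X * G) k l = F k p * X p q * G q l := by
  have hF0 : ∀ p', p' ≠ p → F k p' = 0 := fun p' hp' =>
    not_not.mp fun h => hp' (hF.eq_of_row_apply_ne_zero h hp)
  have hG0 : ∀ q', q' ≠ q → G q' l = 0 := fun q' hq' =>
    not_not.mp fun h => hq' (hG.eq_of_col_apply_ne_zero h hq)
  rw [mul_apply, Fintype.sum_eq_single q fun q' hq' => by rw [hG0 q' hq', mul_zero], mul_apply,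
    Fintype.sum_eq_single p fun p' hp' => by rw [hF0 p' hp', zero_mul]]

theorem mul_mul_apply_eq_zero [NoZeroDivisors α] {F G X Y : Matrix ι ι α}
    (hF : NormalizesDiag F) (hG : NormalizesDiag G) (hXY : ∀ p q, Y p q = 0 → X p q = 0)
    {k l : ι} (h : (F * Y * G) k l = 0) : (F * X * G) k l = 0 := by
  by_cases hk : ∃ p, F k p ≠ 0
  swap
  · push Not at hk
    simp [mul_apply, hk]
  by_cases hl : ∃ q, G q l ≠ 0
  swap
  · push Not at hl
    simp [mul_apply, hl]
  obtain ⟨p, hp⟩ := hk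
  obtain ⟨q, hq⟩ := hl
  rw [hF.mul_mul_apply_of_ne_zero hG hp hq] at h ⊢
  rw [hXY p q (by simpa [hp, hq] using h), mul_zero, zero_mul]

/-- The partition of unity cuts `vᴴ * d * v` into the blocks `(L a * v)ᴴ * d * (L a * v)`,
since `d * L a = (L a)ᴴ * d * L a` for diagonal `d`. -/
theorem of_sum_eq_one {κ : Type*} [Fintype κ] {v : Matrix ι ι α} {L R : κ → Matrix ι ι α}
    (hL : ∀ a, (L a).IsDiag ∧ IsStarProjection (L a))
    (hR : ∀ a, (R a).IsDiag ∧ IsStarProjection (R a)) (hLsum : ∑ a, L a = 1)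
    (hRsum : ∑ a, R a = 1) (hLv : ∀ a, NormalizesDiag (L a * v))
    (hvR : ∀ a, NormalizesDiag (v * R a)) : NormalizesDiag v := by
  intro d hd
  have hproj : ∀ P : Matrix ι ι α, P.IsDiag ∧ IsStarProjection P →
      Pᴴ * d * P = d * P ∧ P * d * Pᴴ = P * d := by
    rintro P ⟨hPd, hP⟩
    rw [← star_eq_conjTranspose, hP.isSelfAdjoint.star_eq, (hPd.commute hd).eq,
      Matrix.mul_assoc, hP.isIdempotentElem.eq]
    exact ⟨rfl, rfl⟩
  constructor
  · have hsum : vᴴ * d * v = ∑ a, (L a * v)ᴴ * d * (L a * v) := calc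
        vᴴ * d * v = vᴴ * (d * ∑ a, L a) * v := by rw [hLsum, Matrix.mul_one]
        _ = ∑ a, vᴴ * (d * L a) * v := by rw [Finset.mul_sum, Finset.mul_sum, Finset.sum_mul]
        _ = ∑ a, (L a * v)ᴴ * d * (L a * v) := Finset.sum_congr rfl fun a _ => by
          rw [← (hproj _ (hL a)).1, conjTranspose_mul]
          simp only [Matrix.mul_assoc]
    rw [hsum]
    exact isDiag_sum fun a _ => (hLv a d hd).1
  · have hsum : v * d * vᴴ = ∑ a, (v * R a) * d * (v * R a)ᴴ := calc
        v * d * vᴴ = v * ((∑ a, R a) * d) * vᴴ := by rw [hRsum, Matrix.one_mul]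
        _ = ∑ a, v * (R a * d) * vᴴ := by rw [Finset.sum_mul, Finset.mul_sum, Finset.sum_mul]
        _ = ∑ a, (v * R a) * d * (v * R a)ᴴ := Finset.sum_congr rfl fun a _ => by
          rw [← (hproj _ (hR a)).2, conjTranspose_mul]
          simp only [Matrix.mul_assoc]
    rw [hsum]
    exact isDiag_sum fun a _ => (hvR a d hd).2

end NormalizesDiag

variable [DecidableEq ι]

theorem Matrix.IsDiag.normalizesDiag {v : Matrix ι ι α} (hv : v.IsDiag) : NormalizesDiag v :=
  fun _ hd => ⟨(hv.conjTranspose.mul hd).mul hv, (hv.mul hd).mul hv.conjTranspose⟩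

theorem normalizesDiag_permMatrix (σ : Perm ι) : NormalizesDiag (σ.permMatrix α) := by
  intro d hd
  simp only [conjTranspose_permMatrix, PEquiv.toMatrix_toPEquiv_mul,
    PEquiv.mul_toMatrix_toPEquiv, submatrix_submatrix]
  exact ⟨hd.submatrix σ⁻¹.injective, hd.submatrix σ.injective⟩

end NormalizesDiag

section MatrixUnits

variable {R ι : Type*} [Ring R] [StarRing R]

structure IsMatrixUnits (s : Setoid ι) (F : ι → ι → R) : Prop where
  mul_eq : ∀ {i j k}, s i j → s j k → F i j * F j k = F i k
  star_eq : ∀ {i j}, s i j → star (F i j) = F j i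
  diag_mul_diag_eq_zero : ∀ {i j}, i ≠ j → F i i * F j j = 0

def classRep (s : Setoid ι) (i : ι) : ι := (Quotient.mk s i).out

theorem rel_classRep (s : Setoid ι) (i : ι) : s i (classRep s i) :=
  s.symm (Quotient.mk_out i)

theorem classRep_eq_of_rel {s : Setoid ι} {i j : ι} (h : s i j) : classRep s i = classRep s j :=
  congrArg Quotient.out (Quotient.sound h)

namespace IsMatrixUnits

variable {s : Setoid ι} {F G : ι → ι → R}

theorem mul_eq_zero (hF : IsMatrixUnits s F) {i j k l : ι} (hij : s i j) (hkl : s k l)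
    (hjk : j ≠ k) : F i j * F k l = 0 := by
  rw [← hF.mul_eq hij (s.refl j), ← hF.mul_eq (s.refl k) hkl, mul_assoc, ← mul_assoc (F j j),
    hF.diag_mul_diag_eq_zero hjk, zero_mul, mul_zero]

theorem isStarProjection_diag (hF : IsMatrixUnits s F) (i : ι) : IsStarProjection (F i i) :=
  ⟨hF.mul_eq (s.refl i) (s.refl i), hF.star_eq (s.refl i)⟩

theorem mul_eq_mul_of_eqvGen {r : ι → ι → Prop}
    (hF : IsMatrixUnits (Relation.EqvGen.setoid r) F)
    (hG : IsMatrixUnits (Relation.EqvGen.setoid r) G) (hr : ∀ i, r i i) {U : R}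
    (hU : star U * U = 1) (hU' : U * star U = 1)
    (hFG : ∀ i j, r i j → star U * F i j * U = G i j)
    {i j : ι} (h : Relation.EqvGen r i j) : F i j * U = U * G i j := by
  induction h with
  | rel i j hij => rw [← hFG i j hij, ← mul_assoc, ← mul_assoc, hU', one_mul]
  | refl i => rw [← hFG i i (hr i), ← mul_assoc, ← mul_assoc, hU', one_mul]
  | symm i j hij ih =>
    have h : star U * F i j = G i j * star U := calc
      star U * F i j = star U * (F i j * U) * star U := by rw [mul_assoc, mul_assoc, hU', mul_one]
      _ = G i j * star U := by rw [ih, ← mul_assoc, hU, one_mul]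
    rw [← hF.star_eq hij, ← hG.star_eq hij]
    simpa only [star_mul, star_star] using congrArg star h
  | trans i j k hij hjk ih₁ ih₂ =>
    rw [← hF.mul_eq hij hjk, mul_assoc, ih₂, ← mul_assoc, ih₁, mul_assoc, hG.mul_eq hij hjk]

end IsMatrixUnits

variable [Fintype ι]

def unitCompl (F : ι → ι → R) : R := 1 - ∑ i, F i i

/-- The unitary built from a unitary `P` that only intertwines the diagonal units: each
`F i i` is moved to the diagonal unit of its class representative, where `P` acts. -/
def extendIntertwiner (s : Setoid ι) (F G : ι → ι → R) (P : R) : R :=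
  ∑ i, F i (classRep s i) * P * G (classRep s i) i + unitCompl F * P

namespace IsMatrixUnits

variable {s : Setoid ι} {F G : ι → ι → R}

theorem star_unitCompl (hF : IsMatrixUnits s F) : star (unitCompl F) = unitCompl F := by
  simp only [unitCompl, star_sub, star_one, star_sum, hF.star_eq (s.refl _)]

theorem mul_unitCompl (hF : IsMatrixUnits s F) {i j : ι} (hij : s i j) :
    F i j * unitCompl F = 0 := by
  rw [unitCompl, mul_sub, mul_one, Finset.mul_sum,
    Fintype.sum_eq_single j fun k hk => hF.mul_eq_zero hij (s.refl k) (Ne.symm hk),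
    hF.mul_eq hij (s.refl j), sub_self]

theorem unitCompl_mul (hF : IsMatrixUnits s F) {i j : ι} (hij : s i j) :
    unitCompl F * F i j = 0 := by
  rw [← hF.star_unitCompl, ← hF.star_eq (s.symm hij), ← star_mul,
    hF.mul_unitCompl (s.symm hij), star_zero]

theorem isStarProjection_unitCompl (hF : IsMatrixUnits s F) : IsStarProjection (unitCompl F) := by
  refine ⟨?_, hF.star_unitCompl⟩
  change unitCompl F * unitCompl F = unitCompl F
  conv_lhs => enter [2]; rw [unitCompl]
  rw [mul_sub, mul_one, Finset.mul_sum, Finset.sum_eq_zero fun i _ => hF.unitCompl_mul (s.refl i),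
    sub_zero]

end IsMatrixUnits

end MatrixUnits

section Intertwiner

variable {R ι : Type*} [Ring R] [Fintype ι] {F G : ι → ι → R} {P : R}

theorem unitCompl_mul_eq_mul_unitCompl (hP : ∀ i, F i i * P = P * G i i) :
    unitCompl F * P = P * unitCompl G := by
  simp only [unitCompl, sub_mul, mul_sub, one_mul, mul_one, Finset.sum_mul, Finset.mul_sum, hP]

variable [StarRing R] {s : Setoid ι}

namespace IsMatrixUnits

theorem mul_extendIntertwiner (hF : IsMatrixUnits s F) {i j : ι} (hij : s i j) :
    F i j * extendIntertwiner s F G P = F i (classRep s i) * P * G (classRep s i) j := by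
  have hoff : ∀ k, k ≠ j → F i j * (F k (classRep s k) * P * G (classRep s k) k) = 0 :=
    fun k hk => by
      rw [← mul_assoc, ← mul_assoc, hF.mul_eq_zero hij (rel_classRep s k) (Ne.symm hk),
        zero_mul, zero_mul]
  have hdiag : F i j * (F j (classRep s j) * P * G (classRep s j) j) =
      F i (classRep s i) * P * G (classRep s i) j := by
    rw [← mul_assoc, ← mul_assoc, hF.mul_eq hij (rel_classRep s j), classRep_eq_of_rel hij]
  have hcompl : F i j * (unitCompl F * P) = 0 := by
    rw [← mul_assoc, hF.mul_unitCompl hij, zero_mul]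
  rw [extendIntertwiner, mul_add, Finset.mul_sum, Fintype.sum_eq_single j hoff, hdiag, hcompl,
    add_zero]

theorem extendIntertwiner_mul (hG : IsMatrixUnits s G) (hP : ∀ i, F i i * P = P * G i i)
    {i j : ι} (hij : s i j) :
    extendIntertwiner s F G P * G i j = F i (classRep s i) * P * G (classRep s i) j := by
  have hoff : ∀ k, k ≠ i → F k (classRep s k) * P * G (classRep s k) k * G i j = 0 :=
    fun k hk => by
      rw [mul_assoc, hG.mul_eq_zero (s.symm (rel_classRep s k)) hij hk, mul_zero]
  have hdiag : F i (classRep s i) * P * G (classRep s i) i * G i j =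
      F i (classRep s i) * P * G (classRep s i) j := by
    rw [mul_assoc, hG.mul_eq (s.symm (rel_classRep s i)) hij]
  have hcompl : unitCompl F * P * G i j = 0 := by
    rw [unitCompl_mul_eq_mul_unitCompl hP, mul_assoc, hG.unitCompl_mul hij, mul_zero]
  rw [extendIntertwiner, add_mul, Finset.sum_mul, Fintype.sum_eq_single i hoff, hdiag, hcompl,
    add_zero]

theorem unitCompl_mul_extendIntertwiner (hF : IsMatrixUnits s F) :
    unitCompl F * extendIntertwiner s F G P = unitCompl F * P := by
  have hblock : ∀ k, unitCompl F * (F k (classRep s k) * P * G (classRep s k) k) = 0 :=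
    fun k => by rw [← mul_assoc, ← mul_assoc, hF.unitCompl_mul (rel_classRep s k), zero_mul,
      zero_mul]
  rw [extendIntertwiner, mul_add, Finset.mul_sum, Finset.sum_eq_zero fun k _ => hblock k,
    zero_add, ← mul_assoc, hF.isStarProjection_unitCompl.isIdempotentElem.eq]

theorem extendIntertwiner_mul_unitCompl (hG : IsMatrixUnits s G)
    (hP : ∀ i, F i i * P = P * G i i) :
    extendIntertwiner s F G P * unitCompl G = unitCompl F * P := by
  have hblock : ∀ k, F k (classRep s k) * P * G (classRep s k) k * unitCompl G = 0 :=
    fun k => by rw [mul_assoc, hG.mul_unitCompl (s.symm (rel_classRep s k)), mul_zero]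
  rw [extendIntertwiner, add_mul, Finset.sum_mul, Finset.sum_eq_zero fun k _ => hblock k,
    zero_add, unitCompl_mul_eq_mul_unitCompl hP, mul_assoc,
    hG.isStarProjection_unitCompl.isIdempotentElem.eq]

theorem extendIntertwiner_mul_star_self (hF : IsMatrixUnits s F) (hG : IsMatrixUnits s G)
    (hP : ∀ i, F i i * P = P * G i i) (hPP : P * star P = 1) :
    extendIntertwiner s F G P * star (extendIntertwiner s F G P) = 1 := by
  set V := extendIntertwiner s F G P
  have hstarP : star P * unitCompl F = unitCompl G * star P := by
    rw [← hF.star_unitCompl, ← hG.star_unitCompl, ← star_mul, ← star_mul,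
      unitCompl_mul_eq_mul_unitCompl hP]
  have hblock : ∀ k, V * star (F k (classRep s k) * P * G (classRep s k) k) = F k k := fun k => by
    have hk := rel_classRep s k
    rw [star_mul, star_mul, hF.star_eq hk, hG.star_eq (s.symm hk), ← mul_assoc, ← mul_assoc,
      hG.extendIntertwiner_mul hP hk, mul_assoc _ P, ← hP, ← mul_assoc, mul_assoc _ P,
      hPP, mul_one, hF.mul_eq hk (s.refl _), hF.mul_eq hk (s.symm hk)]
  have hcompl : V * star (unitCompl F * P) = unitCompl F := by
    rw [star_mul, hF.star_unitCompl, hstarP, ← mul_assoc, hG.extendIntertwiner_mul_unitCompl hP,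
      mul_assoc, hPP, mul_one]
  calc V * star V = V * star (∑ k, F k (classRep s k) * P * G (classRep s k) k
        + unitCompl F * P) := rfl
    _ = ∑ k, V * star (F k (classRep s k) * P * G (classRep s k) k)
        + V * star (unitCompl F * P) := by rw [star_add, star_sum, mul_add, Finset.mul_sum]
    _ = 1 := by rw [Finset.sum_congr rfl fun k _ => hblock k, hcompl, unitCompl, add_sub_cancel]

end IsMatrixUnits

end Intertwiner

section NormalizingIntertwiner

variable {ι κ α : Type*} [Fintype κ] [DecidableEq κ] [CommRing α] [StarRing α]
  {s : Setoid ι} {F G : ι → ι → Matrix κ κ α} {P U : Matrix κ κ α}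

namespace IsMatrixUnits

theorem isDiag_diag (hF : IsMatrixUnits s F) (hFn : ∀ i j, s i j → NormalizesDiag (F i j))
    (i : ι) : (F i i).IsDiag :=
  (hFn i i (s.refl i)).isDiag_of_isStarProjection (hF.isStarProjection_diag i)

variable [Fintype ι]

theorem isDiag_unitCompl (hF : IsMatrixUnits s F)
    (hFn : ∀ i j, s i j → NormalizesDiag (F i j)) : (unitCompl F).IsDiag :=
  isDiag_one.sub (isDiag_sum fun i _ => hF.isDiag_diag hFn i)

end IsMatrixUnits

variable [Fintype ι]

theorem normalizesDiag_extendIntertwiner (hF : IsMatrixUnits s F) (hG : IsMatrixUnits s G)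
    (hFn : ∀ i j, s i j → NormalizesDiag (F i j))
    (hGn : ∀ i j, s i j → NormalizesDiag (G i j)) (hP : ∀ i, F i i * P = P * G i i)
    (hPn : NormalizesDiag P) :
    NormalizesDiag (extendIntertwiner s F G P) := by
  have hblock : ∀ k, NormalizesDiag (F k (classRep s k) * P * G (classRep s k) k) := fun k =>
    ((hFn _ _ (rel_classRep s k)).mul hPn).mul (hGn _ _ (s.symm (rel_classRep s k)))
  have hcompl : NormalizesDiag (unitCompl F * P) :=
    (hF.isDiag_unitCompl hFn).normalizesDiag.mul hPn
  refine NormalizesDiag.of_sum_eq_one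
    (L := fun a : Option ι => a.elim (unitCompl F) fun i => F i i)
    (R := fun a : Option ι => a.elim (unitCompl G) fun i => G i i) ?_ ?_ ?_ ?_ ?_ ?_
  · rintro (_ | i)
    exacts [⟨hF.isDiag_unitCompl hFn, hF.isStarProjection_unitCompl⟩,
      ⟨hF.isDiag_diag hFn i, hF.isStarProjection_diag i⟩]
  · rintro (_ | i)
    exacts [⟨hG.isDiag_unitCompl hGn, hG.isStarProjection_unitCompl⟩,
      ⟨hG.isDiag_diag hGn i, hG.isStarProjection_diag i⟩]
  · simp [Fintype.sum_option, unitCompl]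
  · simp [Fintype.sum_option, unitCompl]
  · rintro (_ | k)
    · simpa [hF.unitCompl_mul_extendIntertwiner] using hcompl
    · simpa [hF.mul_extendIntertwiner (s.refl k)] using hblock k
  · rintro (_ | k)
    · simpa [hG.extendIntertwiner_mul_unitCompl hP] using hcompl
    · simpa [hG.extendIntertwiner_mul hP (s.refl k)] using hblock k

theorem extendIntertwiner_apply_eq_zero [NoZeroDivisors α] (hF : IsMatrixUnits s F)
    (hG : IsMatrixUnits s G) (hFn : ∀ i j, s i j → NormalizesDiag (F i j))
    (hGn : ∀ i j, s i j → NormalizesDiag (G i j))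
    (hFU : ∀ i j, s i j → F i j * U = U * G i j) (hPU : ∀ k l, P k l ≠ 0 → U k l ≠ 0)
    {k l : κ} (hkl : U k l = 0) :
    extendIntertwiner s F G P k l = 0 := by
  have hPU' : ∀ p q, U p q = 0 → P p q = 0 := fun p q hpq => not_not.mp fun h => hPU p q h hpq
  rw [extendIntertwiner, Matrix.add_apply, Matrix.sum_apply, Finset.sum_eq_zero, zero_add,
    (hF.isDiag_unitCompl hFn).mul_apply_eq_zero (hPU' k l hkl)]
  intro i _
  have hi := rel_classRep s i
  refine (hFn _ _ hi).mul_mul_apply_eq_zero (hGn _ _ (s.symm hi)) hPU' ?_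
  rw [hFU _ _ hi, mul_assoc, hG.mul_eq hi (s.symm hi), ← hFU i i (s.refl i)]
  exact (hF.isDiag_diag hFn i).mul_apply_eq_zero hkl

theorem exists_normalizesDiag_unitary_intertwiner [IsDomain α] (hF : IsMatrixUnits s F)
    (hG : IsMatrixUnits s G) (hFn : ∀ i j, s i j → NormalizesDiag (F i j))
    (hGn : ∀ i j, s i j → NormalizesDiag (G i j)) (hU : U * Uᴴ = 1)
    (hFU : ∀ i j, s i j → F i j * U = U * G i j) :
    ∃ V : Matrix κ κ α, NormalizesDiag V ∧ Vᴴ * V = 1 ∧ V * Vᴴ = 1 ∧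
      (∀ k l, U k l = 0 → V k l = 0) ∧ ∀ i j, s i j → Vᴴ * F i j * V = G i j := by
  obtain ⟨σ, hσU⟩ := exists_permMatrix_support_subset (det_ne_zero_of_right_inverse hU)
  have hP : ∀ i, F i i * σ.permMatrix α = σ.permMatrix α * G i i := fun i =>
    (hF.isDiag_diag hFn i).mul_eq_mul_of_support (hG.isDiag_diag hGn i) (hFU i i (s.refl i)) hσU
  set V := extendIntertwiner s F G (σ.permMatrix α)
  have hVV : V * Vᴴ = 1 :=
    hF.extendIntertwiner_mul_star_self hG hP (permMatrix_mul_conjTranspose_self σ)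
  have hVV' : Vᴴ * V = 1 := mul_eq_one_comm.mp hVV
  refine ⟨V, normalizesDiag_extendIntertwiner hF hG hFn hGn hP (normalizesDiag_permMatrix σ),
    hVV', hVV, fun k l => extendIntertwiner_apply_eq_zero hF hG hFn hGn hFU hσU,
    fun i j hij => ?_⟩
  rw [mul_assoc, hF.mul_extendIntertwiner hij, ← hG.extendIntertwiner_mul hP hij, ← mul_assoc,
    hVV', one_mul]

end NormalizingIntertwiner

section DigraphAlg

variable {n m : ℕ} {r r₁ : Fin n → Fin n → Prop} {r₂ : Fin m → Fin m → Prop}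
  {Φ : Matrix (Fin n) (Fin n) ℂ → Matrix (Fin m) (Fin m) ℂ}

theorem single_mem_digraphAlg {i j : Fin n} (h : r i j) (c : ℂ) :
    single i j c ∈ digraphAlg n r := by
  intro k l hkl
  rw [single_apply, if_neg]
  rintro ⟨rfl, rfl⟩
  exact hkl h

theorem single_apply_mem_digraphAlg {a : Matrix (Fin n) (Fin n) ℂ} (ha : a ∈ digraphAlg n r)
    (i j : Fin n) : single i j (a i j) ∈ digraphAlg n r := by
  intro k l hkl
  rw [single_apply]
  split_ifs with h
  · obtain ⟨rfl, rfl⟩ := h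
    exact ha _ _ hkl
  · rfl

theorem digraphAlg_subset_cstarAlg : digraphAlg n r ⊆ cstarAlg n r :=
  StarAlgebra.subset_adjoin ℂ _

theorem single_mem_cstarAlg (hr : ∀ i, r i i) {i j : Fin n} (h : Relation.EqvGen r i j) :
    single i j (1 : ℂ) ∈ cstarAlg n r := by
  induction h with
  | rel i j hij => exact digraphAlg_subset_cstarAlg (single_mem_digraphAlg hij 1)
  | refl i => exact digraphAlg_subset_cstarAlg (single_mem_digraphAlg (hr i) 1)
  | symm i j _ ih =>
    have h := star_mem ih
    rwa [star_eq_conjTranspose, conjTranspose_single, star_one] at h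
  | trans i j k _ _ ih₁ ih₂ =>
    have h := mul_mem ih₁ ih₂
    rwa [single_mul_single_same, one_mul] at h

theorem single_mem_diagNormaliser {i j : Fin n} (h : r i j) :
    single i j (1 : ℂ) ∈ diagNormaliser n r := by
  refine ⟨single_mem_digraphAlg h 1, by simp [conjTranspose_single], fun d _ => ?_⟩
  simp only [conjTranspose_single, star_one, single_mul_mul_single, ← diagonal_single]
  exact ⟨isDiag_diagonal _, isDiag_diagonal _⟩

namespace IsStarExtHom

theorem map_zero (hΦ : IsStarExtHom n m r₁ r₂ Φ) : Φ 0 = 0 := by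
  have h := hΦ.1 0 (zero_mem _) 0 (zero_mem _)
  rwa [add_zero, left_eq_add] at h

theorem map_sum (hΦ : IsStarExtHom n m r₁ r₂ Φ) {ι : Type*} (s : Finset ι)
    (f : ι → Matrix (Fin n) (Fin n) ℂ) (hf : ∀ t ∈ s, f t ∈ cstarAlg n r₁) :
    Φ (∑ t ∈ s, f t) = ∑ t ∈ s, Φ (f t) := by
  classical
  induction s using Finset.induction_on with
  | empty => simpa using hΦ.map_zero
  | insert a s ha ih =>
    have hs : ∀ t ∈ s, f t ∈ cstarAlg n r₁ := fun t ht => hf t (Finset.mem_insert_of_mem ht)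
    rw [Finset.sum_insert ha, Finset.sum_insert ha,
      hΦ.1 _ (hf a (Finset.mem_insert_self a s)) _ (sum_mem hs), ih hs]

theorem map_eq_sum_smul (hΦ : IsStarExtHom n m r₁ r₂ Φ) {a : Matrix (Fin n) (Fin n) ℂ}
    (ha : a ∈ digraphAlg n r₁) : Φ a = ∑ i, ∑ j, a i j • Φ (single i j 1) := by
  have hmem : ∀ i j, single i j (a i j) ∈ cstarAlg n r₁ := fun i j =>
    digraphAlg_subset_cstarAlg (single_apply_mem_digraphAlg ha i j)
  conv_lhs => rw [matrix_eq_sum_single a]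
  rw [hΦ.map_sum _ _ fun i _ => sum_mem fun j _ => hmem i j]
  refine Finset.sum_congr rfl fun i _ => ?_
  rw [hΦ.map_sum _ _ fun j _ => hmem i j]
  refine Finset.sum_congr rfl fun j _ => ?_
  by_cases hij : r₁ i j
  · rw [← hΦ.2.1 _ _ (digraphAlg_subset_cstarAlg (single_mem_digraphAlg hij 1)), smul_single,
      smul_eq_mul, mul_one]
  · rw [ha i j hij, single_zero, zero_smul, hΦ.map_zero]

theorem isMatrixUnits (hΦ : IsStarExtHom n m r₁ r₂ Φ) (hr : ∀ i, r₁ i i) :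
    IsMatrixUnits (Relation.EqvGen.setoid r₁) fun i j => Φ (single i j 1) where
  mul_eq hij hjk := by
    rw [← hΦ.2.2.1 _ (single_mem_cstarAlg hr hij) _ (single_mem_cstarAlg hr hjk),
      single_mul_single_same, one_mul]
  star_eq hij := by
    rw [star_eq_conjTranspose, ← hΦ.2.2.2.1 _ (single_mem_cstarAlg hr hij),
      conjTranspose_single, star_one]
  diag_mul_diag_eq_zero hij := by
    rw [← hΦ.2.2.1 _ (single_mem_cstarAlg hr (.refl _)) _ (single_mem_cstarAlg hr (.refl _)),
      single_mul_single_of_ne _ _ _ _ hij, hΦ.map_zero]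

theorem mul_map_mul_eq_of_single {Ψ : Matrix (Fin n) (Fin n) ℂ → Matrix (Fin m) (Fin m) ℂ}
    (hΦ : IsStarExtHom n m r₁ r₂ Φ) (hΨ : IsStarExtHom n m r₁ r₂ Ψ)
    {V W : Matrix (Fin m) (Fin m) ℂ}
    (h : ∀ i j, r₁ i j → W * Φ (single i j 1) * V = Ψ (single i j 1))
    {a : Matrix (Fin n) (Fin n) ℂ} (ha : a ∈ digraphAlg n r₁) : W * Φ a * V = Ψ a := by
  rw [hΦ.map_eq_sum_smul ha, hΨ.map_eq_sum_smul ha]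
  simp only [Finset.mul_sum, Finset.sum_mul, Matrix.mul_smul, Matrix.smul_mul]
  refine Finset.sum_congr rfl fun i _ => Finset.sum_congr rfl fun j _ => ?_
  by_cases hij : r₁ i j
  · rw [h i j hij]
  · rw [ha i j hij, zero_smul, zero_smul]

end IsStarExtHom

theorem IsStandardRegularHom.normalizesDiag_single (hΦ : IsStandardRegularHom n m r₁ r₂ Φ)
    (hr : ∀ i, r₁ i i) {i j : Fin n} (h : Relation.EqvGen r₁ i j) :
    NormalizesDiag (Φ (single i j 1)) := by
  induction h with
  | rel i j hij => exact (hΦ.2 _ (single_mem_diagNormaliser hij)).2.2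
  | refl i => exact (hΦ.2 _ (single_mem_diagNormaliser (hr i))).2.2
  | symm i j hij ih =>
    rw [← star_one, ← conjTranspose_single, hΦ.1.1.2.2.2.1 _ (single_mem_cstarAlg hr hij)]
    exact ih.conjTranspose
  | trans i j k hij hjk ih₁ ih₂ =>
    rw [← one_mul (1 : ℂ), ← single_mul_single_same _ i j k,
      hΦ.1.1.2.2.1 _ (single_mem_cstarAlg hr hij) _ (single_mem_cstarAlg hr hjk)]
    exact ih₁.mul ih₂

end DigraphAlg

theorem standardRegular_inner_conj_by_normalising_unitary_general (n m : ℕ)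
    (r₁ : Fin n → Fin n → Prop) (r₂ : Fin m → Fin m → Prop)
    (h₁refl : Reflexive r₁)
    (φ₁ φ₂ : Matrix (Fin n) (Fin n) ℂ → Matrix (Fin m) (Fin m) ℂ)
    (h₁ : IsStandardRegularHom n m r₁ r₂ φ₁) (h₂ : IsStandardRegularHom n m r₁ r₂ φ₂)
    (U : Matrix (Fin m) (Fin m) ℂ) (hU : IsUnitaryIn m r₂ U)
    (hconj : ∀ a ∈ digraphAlg n r₁, Uᴴ * φ₁ a * U = φ₂ a) :
    ∃ V : Matrix (Fin m) (Fin m) ℂ,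
      V ∈ diagNormaliser m r₂ ∧ Vᴴ * V = 1 ∧ V * Vᴴ = 1 ∧
      ∀ a ∈ digraphAlg n r₁, Vᴴ * φ₁ a * V = φ₂ a := by
  obtain ⟨hUmem, hUU, hUU'⟩ := hU
  have hF := h₁.1.1.isMatrixUnits h₁refl
  have hG := h₂.1.1.isMatrixUnits h₁refl
  have hFU : ∀ i j, Relation.EqvGen r₁ i j →
      φ₁ (single i j 1) * U = U * φ₂ (single i j 1) :=
    fun _ _ => hF.mul_eq_mul_of_eqvGen hG h₁refl hUU hUU'
      fun i j hij => hconj _ (single_mem_digraphAlg hij 1)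
  obtain ⟨V, hVn, hVV, hVV', hVU, hVFG⟩ :=
    exists_normalizesDiag_unitary_intertwiner hF hG
      (fun _ _ => h₁.normalizesDiag_single h₁refl)
      (fun _ _ => h₂.normalizesDiag_single h₁refl) hUU' hFU
  refine ⟨V, ⟨fun k l hkl => hVU k l (hUmem k l hkl), by rw [hVV', one_mul], hVn⟩, hVV, hVV',
    fun a => h₁.1.1.mul_map_mul_eq_of_single h₂.1.1 fun i j hij => hVFG i j (.rel i j hij)⟩

/-- If two injective standard regular star-extendible homomorphisms between
digraph algebras are conjugate by a unitary of the codomain algebra, then they are conjugate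
by a unitary in the normaliser of the diagonal masa. -/
theorem standardRegular_inner_conj_by_normalising_unitary (n m : ℕ)
    (r₁ : Fin n → Fin n → Prop) (r₂ : Fin m → Fin m → Prop)
    (h₁refl : Reflexive r₁) (h₁trans : Transitive r₁)
    (h₂refl : Reflexive r₂) (h₂trans : Transitive r₂)
    (φ₁ φ₂ : Matrix (Fin n) (Fin n) ℂ → Matrix (Fin m) (Fin m) ℂ)
    (h₁ : IsStandardRegularHom n m r₁ r₂ φ₁) (h₂ : IsStandardRegularHom n m r₁ r₂ φ₂)
    (hinj₁ : Set.InjOn φ₁ (digraphAlg n r₁)) (hinj₂ : Set.InjOn φ₂ (digraphAlg n r₁))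
    (U : Matrix (Fin m) (Fin m) ℂ) (hU : IsUnitaryIn m r₂ U)
    (hconj : ∀ a ∈ digraphAlg n r₁, Uᴴ * φ₁ a * U = φ₂ a) :
    ∃ V : Matrix (Fin m) (Fin m) ℂ,
      V ∈ diagNormaliser m r₂ ∧ Vᴴ * V = 1 ∧ V * Vᴴ = 1 ∧
      ∀ a ∈ digraphAlg n r₁, Vᴴ * φ₁ a * V = φ₂ a :=
  standardRegular_inner_conj_by_normalising_unitary_general n m r₁ r₂ h₁refl φ₁ φ₂ h₁ h₂ U hU hconj
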